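/- Fix an integer p ≥ 2. For every η ∈ ℤⁿ whose last coordinate vanishes (η(n) = 0), the class of η in the quotient group ℤⁿ / image(D^p − 1) is a torsion element: there exists an integer m > 0 such that m·η belongs to image(D^p − 1). -/
import Mathlib


/-!
`ℤⁿ` is the abelian group of functions `Fin n → ℤ` (coordinates `1,…,n`
corresponding to indices `0,…,n-1`).  `shiftE n` is the shift operator `t`,
`(tη)(i) = η(i+1)` for `i < n` and `(tη)(n) = 0`, and
`DE n = 1 + t + t² + … + t^{n−1}`.
-/

noncomputable section

/-- The shift operator `t` on `ℤⁿ`. -/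
def shiftE (n : ℕ) : Module.End ℤ (Fin n → ℤ) :=
  (AddMonoidHom.mk' (fun (η : Fin n → ℤ) (i : Fin n) => if h : (i : ℕ) + 1 < n then η ⟨(i : ℕ) + 1, h⟩ else 0) (by
    intro a b
    funext i
    by_cases h : (i : ℕ) + 1 < n <;> simp [h])).toIntLinearMap

/-- The operator `D = 1 + t + t² + … + t^{n−1}` on `ℤⁿ`. -/
def DE (n : ℕ) : Module.End ℤ (Fin n → ℤ) := ∑ i ∈ Finset.range n, shiftE n ^ i


lemma geom_one_sub {R : Type*} [CommRing R] (y : R) (m : ℕ) :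
    (1 - y) * ∑ i ∈ Finset.range m, y ^ i = 1 - y ^ m := by
  linear_combination (-1 : R) * geom_sum_mul y m

lemma master {R : Type*} [CommRing R] (x : R) (n p : ℕ) :
    ∃ Q J : R, ((∑ i ∈ Finset.range n, x ^ i) ^ p - 1) * Q
      = (p : R) ^ n * x - x ^ n * J := by
  set B : R := ∑ k ∈ Finset.range p, (1 - x) ^ k with hBdef
  set G : R := ∑ k ∈ Finset.range p, ∑ j ∈ Finset.range k, (1 - x) ^ j with hGdef
  set B' : R := ∑ k ∈ Finset.range p, (1 - x ^ n) ^ k with hB'def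
  set E : R := ∑ i ∈ Finset.range n, (p : R) ^ i * (x * G) ^ (n - 1 - i) with hEdef
  have h1 : (∑ i ∈ Finset.range n, x ^ i) * (1 - x) = 1 - x ^ n := by
    linear_combination geom_one_sub x n
  have h1p : (∑ i ∈ Finset.range n, x ^ i) ^ p * (1 - x) ^ p = (1 - x ^ n) ^ p := by
    rw [← mul_pow, h1]
  have h2 : x * B = 1 - (1 - x) ^ p := by
    linear_combination geom_one_sub (1 - x) p
  have h3 : x ^ n * B' = 1 - (1 - x ^ n) ^ p := by
    linear_combination geom_one_sub (1 - x ^ n) p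
  have h5 : (p : R) - B = x * G := by
    have hp : (p : R) = ∑ k ∈ Finset.range p, (1 : R) := by simp
    rw [hp, hBdef, ← Finset.sum_sub_distrib, hGdef, Finset.mul_sum]
    refine Finset.sum_congr rfl fun k _ => ?_
    linear_combination (-1 : R) * geom_one_sub (1 - x) k
  have h4 : E * ((p : R) - x * G) = (p : R) ^ n - (x * G) ^ n :=
    geom_sum₂_mul (p : R) (x * G) n
  exact ⟨(1 - x) ^ p * E, x * G ^ n + B' * E, by
    linear_combination E * h1p + E * h3 - E * h2 + x * h4 - x * E * h5⟩

lemma shiftE_apply (n : ℕ) (η : Fin n → ℤ) (i : Fin n) :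
    shiftE n η i = if h : (i : ℕ) + 1 < n then η ⟨(i : ℕ) + 1, h⟩ else 0 := rfl

lemma shiftE_pow_apply_eq_zero (n k : ℕ) (η : Fin n → ℤ) (i : Fin n)
    (h : n ≤ (i : ℕ) + k) : (shiftE n ^ k) η i = 0 := by
  induction k generalizing η i with
  | zero => exact absurd h (by have := i.isLt; omega)
  | succ k ih =>
      rw [pow_succ']
      rw [Module.End.mul_apply, shiftE_apply]
      split
      · exact ih _ _ (by simp only [Fin.val_mk]; omega)
      · rfl

lemma shiftE_pow_n (n : ℕ) : shiftE n ^ n = 0 := by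
  apply LinearMap.ext
  intro η
  funext i
  exact shiftE_pow_apply_eq_zero n n η i (by have := i.isLt; omega)

/-- For `p ≥ 2` and every `η ∈ ℤⁿ` with vanishing last coordinate, the class of `η`
in `ℤⁿ / image(D^p − 1)` is torsion: some positive multiple of `η` lies in
`image(D^p − 1)`. -/
theorem torsion_of_last_coord_zero (n : ℕ) (hn : 2 ≤ n) (p : ℕ) (hp : 2 ≤ p) :
    ∀ η : Fin n → ℤ, η ⟨n - 1, by omega⟩ = 0 →
      ∃ m : ℤ, 0 < m ∧ m • η ∈ LinearMap.range (DE n ^ p - 1) := by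
  intro η hη
  obtain ⟨Q, J, hQJ⟩ := master (Polynomial.X : Polynomial ℤ) n p
  set s : Module.End ℤ (Fin n → ℤ) := shiftE n with hsdef
  have hs : s ^ n = 0 := shiftE_pow_n n
  -- the preimage ξ of η under s
  set ξ : Fin n → ℤ := fun j => if h : 1 ≤ (j : ℕ) then η ⟨(j : ℕ) - 1, by omega⟩ else 0 with hξ
  have hsξ : s ξ = η := by
    funext i
    rw [hsdef, shiftE_apply]
    split
    · next h =>
        simp only [hξ]
        rw [dif_pos (by omega)]
        congr 1
    · next h =>
        have : i = ⟨n - 1, by omega⟩ := by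
          apply Fin.ext
          have := i.isLt
          simp only []
          omega
        rw [this, hη]
  have key : (DE n ^ p - 1) * Polynomial.aeval s Q
      = (p : Module.End ℤ (Fin n → ℤ)) ^ n * s := by
    have h := congrArg (Polynomial.aeval s) hQJ
    simp only [map_mul, map_sub, map_pow, map_sum, map_one, map_natCast,
      Polynomial.aeval_X] at h
    rw [show DE n = ∑ x ∈ Finset.range n, s ^ x from rfl, h, hs, zero_mul, sub_zero]
  refine ⟨(p : ℤ) ^ n, by positivity, Polynomial.aeval s Q ξ, ?_⟩
  have happ : (DE n ^ p - 1) (Polynomial.aeval s Q ξ)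
      = ((p : Module.End ℤ (Fin n → ℤ)) ^ n * s) ξ := by
    rw [← Module.End.mul_apply, key]
  rw [happ, Module.End.mul_apply, hsξ]
  show ((p : Module.End ℤ (Fin n → ℤ)) ^ n) η = (p : ℤ) ^ n • η
  rw [← Nat.cast_pow, Module.End.natCast_apply]
  simp
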